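/- arXiv:1506.03764 — 2 statements merged into one kernel-verified Lean document; each statement's English description precedes it below -/
import Mathlib

section
/- The two-dimensional sequence (Y₂(n), Y₂(n+1))_{n≥0} of consecutive pairs of the binary van der Corput sequence is not uniformly distributed modulo 1 in [0,1)²; in particular, every point (Y_b(n), Y_b(n+1)) lies on the union of line segments y = x − 1 + 1/b^k + 1/b^{k+1} for x ∈ [1 − 1/b^k, 1 − 1/b^{k+1}], k ∈ ℕ₀ (stated here for general base b). -/
/-!
Reading off the last digit gives `Y_b(n) = (n mod b + Y_b(⌊n/b⌋)) / b`. If the last digit of `n`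
is below `b - 1`, then `Y_b(n + 1) = Y_b(n) + 1/b` and `Y_b(n) ≤ 1 - 1/b`: the pair lies on
segment `0`. Otherwise the carry propagates to `⌊n/b⌋`, and the affine map `x ↦ (b - 1 + x)/b`,
applied to both coordinates, carries segment `k` onto segment `k + 1`. In base `2`, a pair with
`x < 1/2` therefore lies on segment `0`, so `y = x + 1/2`: the square `[0, 1/2)²`, of area `1/4`,
is never visited.
-/

open scoped Classical
open Filter

/-- The b-adic radical inverse (van der Corput) function. -/
noncomputable def vdc (b n : ℕ) : ℝ :=
  ∑ j ∈ Finset.range (n + 1), ((n / b ^ j % b : ℕ) : ℝ) / (b : ℝ) ^ (j + 1)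

section Digits

variable {b : ℕ}

lemma vdc_nonneg (n : ℕ) : 0 ≤ vdc b n := by
  unfold vdc
  positivity

lemma vdc_eq_sum_range_of_lt (hb : 1 < b) {n M : ℕ} (hM : n < M) :
    vdc b n = ∑ j ∈ Finset.range M, ((n / b ^ j % b : ℕ) : ℝ) / (b : ℝ) ^ (j + 1) := by
  refine Finset.sum_subset (Finset.range_subset_range.2 hM) fun j _ hj => ?_
  have hnj : n < b ^ j := (by simpa using hj : n < j).trans (Nat.lt_pow_self hb)
  simp [Nat.div_eq_of_lt hnj]

lemma vdc_eq_mod_add_vdc_div (hb : 1 < b) (n : ℕ) :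
    vdc b n = ((n % b : ℕ) + vdc b (n / b)) / b := by
  rw [vdc_eq_sum_range_of_lt hb (by omega : n < n + 2), Finset.sum_range_succ',
    vdc_eq_sum_range_of_lt hb (Nat.lt_succ_of_le (Nat.div_le_self n b)), add_div, Finset.sum_div]
  simp only [pow_zero, Nat.div_one, zero_add, mul_one, pow_succ', Nat.div_div_eq_div_mul, div_div]
  rw [add_comm]
  exact congrArg _ (Finset.sum_congr rfl fun j _ => by ring)

lemma vdc_le_one (hb : 1 < b) (n : ℕ) : vdc b n ≤ 1 := by
  induction n using Nat.strong_induction_on with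
  | _ n ih =>
  rcases Nat.eq_zero_or_pos n with rfl | hn
  · simp [vdc]
  have hb0 : (0 : ℝ) < b := by positivity
  have hmod : ((n % b : ℕ) : ℝ) + 1 ≤ b := by exact_mod_cast Nat.mod_lt n (by omega)
  rw [vdc_eq_mod_add_vdc_div hb, div_le_one hb0]
  linarith [ih (n / b) (Nat.div_lt_self hn hb)]

end Digits

def OnSegment (b : ℝ) (k : ℕ) (x y : ℝ) : Prop :=
  x ∈ Set.Icc (1 - 1 / b ^ k) (1 - 1 / b ^ (k + 1)) ∧ y = x - 1 + 1 / b ^ k + 1 / b ^ (k + 1)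

namespace OnSegment

variable {b x y : ℝ} {k : ℕ}

lemma zero (hx₀ : 0 ≤ x) (hx₁ : x ≤ 1 - 1 / b) : OnSegment b 0 x (x + 1 / b) :=
  ⟨⟨by simpa using hx₀, by simpa using hx₁⟩, by ring⟩

lemma succ (hb : 0 < b) (h : OnSegment b k x y) :
    OnSegment b (k + 1) ((b - 1 + x) / b) (y / b) := by
  obtain ⟨⟨hlo, hhi⟩, rfl⟩ := h
  have hstep (j : ℕ) : 1 - 1 / b ^ (j + 1) = (b - 1 + (1 - 1 / b ^ j)) / b := by
    field_simp
    ring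
  refine ⟨⟨?_, ?_⟩, ?_⟩
  · rw [hstep]
    gcongr
  · rw [hstep (k + 1)]
    gcongr
  · field_simp
    ring

lemma eq_add_one_div_of_lt (hb : 1 ≤ b) (h : OnSegment b k x y) (hx : x < 1 - 1 / b) :
    y = x + 1 / b := by
  obtain ⟨⟨hlo, -⟩, rfl⟩ := h
  obtain rfl : k = 0 := by
    by_contra hk
    have : 1 / b ^ k ≤ 1 / b := one_div_le_one_div_of_le (by positivity) (le_self_pow₀ hb hk)
    linarith
  ring

end OnSegment

theorem exists_onSegment_vdc {b : ℕ} (hb : 2 ≤ b) (n : ℕ) :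
    ∃ k, OnSegment b k (vdc b n) (vdc b (n + 1)) := by
  induction n using Nat.strong_induction_on with
  | _ n ih =>
  have hb₁ : 1 < b := hb
  have hb₀ : (0 : ℝ) < b := by positivity
  have hdiv := Nat.div_add_mod n b
  rcases Nat.lt_or_eq_of_le (Nat.mod_lt n (by omega) : n % b + 1 ≤ b) with hlt | heq
  · -- no carry: only the last digit changes
    obtain ⟨hq, hr⟩ := (Nat.div_mod_unique (by omega : 0 < b)).2
      (⟨by linarith, hlt⟩ : n % b + 1 + b * (n / b) = n + 1 ∧ n % b + 1 < b)
    have hmod : ((n % b : ℕ) : ℝ) + 1 + 1 ≤ b := by exact_mod_cast hlt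
    have hsucc : vdc b (n + 1) = vdc b n + 1 / b := by
      rw [vdc_eq_mod_add_vdc_div hb₁ (n + 1), hq, hr, vdc_eq_mod_add_vdc_div hb₁ n]
      push_cast
      ring
    refine ⟨0, hsucc ▸ OnSegment.zero (vdc_nonneg n) ?_⟩
    rw [vdc_eq_mod_add_vdc_div hb₁, div_le_iff₀ hb₀, sub_mul, one_div_mul_cancel hb₀.ne']
    linarith [vdc_le_one hb₁ (n / b)]
  · -- carry: the trailing digit `b - 1` becomes `0` and `n / b` is incremented
    obtain ⟨hq, hr⟩ := (Nat.div_mod_unique (by omega : 0 < b)).2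
      (⟨by linarith, by omega⟩ : 0 + b * (n / b + 1) = n + 1 ∧ 0 < b)
    have hmod : ((n % b : ℕ) : ℝ) + 1 = b := by exact_mod_cast heq
    obtain ⟨k, hk⟩ := ih (n / b) (Nat.div_lt_self (by omega) hb₁)
    refine ⟨k + 1, ?_⟩
    rw [vdc_eq_mod_add_vdc_div hb₁ (n + 1), hq, hr, vdc_eq_mod_add_vdc_div hb₁ n,
      eq_sub_of_add_eq hmod]
    simpa using hk.succ hb₀

lemma half_le_vdc_two_succ_of_lt_half {n : ℕ} (h : vdc 2 n < 1 / 2) : 1 / 2 ≤ vdc 2 (n + 1) := by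
  obtain ⟨k, hk⟩ := exists_onSegment_vdc le_rfl n
  have hsucc := hk.eq_add_one_div_of_lt (by norm_num) (by norm_num; linarith)
  push_cast at hsucc
  linarith [vdc_nonneg (b := 2) n]

/-- The sequence of consecutive pairs of the binary van der Corput sequence is not
uniformly distributed in `[0,1)²`; moreover, for any base `b`, every pair
`(Y_b(n), Y_b(n+1))` lies on one of the line segments
`y = x − 1 + 1 / b ^ k + 1 / b ^ (k+1)`, `x ∈ [1 − 1 / b ^ k, 1 − 1 / b ^ (k+1)]`. -/
theorem vdc_pairs_not_ud_and_on_segments :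
    (¬ ∀ a₁ c₁ a₂ c₂ : ℝ, 0 ≤ a₁ → a₁ < c₁ → c₁ ≤ 1 → 0 ≤ a₂ → a₂ < c₂ → c₂ ≤ 1 →
        Tendsto (fun N : ℕ =>
            (((Finset.range N).filter (fun n =>
              vdc 2 n ∈ Set.Ico a₁ c₁ ∧ vdc 2 (n + 1) ∈ Set.Ico a₂ c₂)).card : ℝ) / N)
          atTop (nhds ((c₁ - a₁) * (c₂ - a₂)))) ∧
    ∀ b : ℕ, 2 ≤ b → ∀ n : ℕ, ∃ k : ℕ,
      vdc b n ∈ Set.Icc (1 - 1 / (b : ℝ) ^ k) (1 - 1 / (b : ℝ) ^ (k + 1)) ∧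
      vdc b (n + 1) = vdc b n - 1 + 1 / (b : ℝ) ^ k + 1 / (b : ℝ) ^ (k + 1) := by
  refine ⟨fun hud => ?_, fun b hb => exists_onSegment_vdc hb⟩
  have hempty (N : ℕ) : (Finset.range N).filter (fun n =>
      vdc 2 n ∈ Set.Ico (0 : ℝ) (1 / 2) ∧ vdc 2 (n + 1) ∈ Set.Ico (0 : ℝ) (1 / 2)) = ∅ :=
    Finset.filter_false_of_mem fun n _ ⟨⟨_, hx⟩, ⟨_, hy⟩⟩ =>
      (half_le_vdc_two_succ_of_lt_half hx).not_gt hy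
  have hquarter := hud 0 (1 / 2) 0 (1 / 2) le_rfl (by norm_num) (by norm_num) le_rfl
    (by norm_num) (by norm_num)
  simp only [hempty, Finset.card_empty, Nat.cast_zero, zero_div, tendsto_const_nhds_iff] at hquarter
  norm_num at hquarter
end

section
/- Let T₂ be the binary von Neumann–Kakutani transformation defined by T₂(x) = x − 1 + 1/2^k + 1/2^{k+1} for x ∈ [1 − 1/2^k, 1 − 1/2^{k+1}), k ∈ ℕ₀. Then T₂ preserves Lebesgue measure on [0,1), and the orbit of 0 under T₂ is the binary van der Corput sequence: T₂ⁿ(0) = Y₂(n) for all n ∈ ℕ₀. -/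
open scoped Classical
open MeasureTheory

/-!
`T₂` translates each interval `[1 - 2⁻ᵏ, 1 - 2⁻ᵏ⁻¹)` onto `[2⁻ᵏ⁻¹, 2⁻ᵏ)`; the former tile `[0, 1)`,
the latter tile `(0, 1)`, so `T₂` preserves Lebesgue measure on `[0, 1)` as a piecewise
translation. For the orbit, the radical inverse satisfies `Y₂(2m) = Y₂(m) / 2` and
`Y₂(2m + 1) = (Y₂(m) + 1) / 2`. For even `n` this puts `Y₂(n)` in `[0, 1/2)` and
`Y₂(n + 1) = Y₂(n) + 1/2`. For `n = 2m + 1` the maps `x ↦ (x + 1) / 2` and `x ↦ x / 2` carry the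
step `Y₂(m) ↦ Y₂(m + 1)`, a translation on `[1 - 2⁻ᵏ, 1 - 2⁻ᵏ⁻¹)`, to the step
`Y₂(n) ↦ Y₂(n + 1)`, which is then `T₂` on `[1 - 2⁻ᵏ⁻¹, 1 - 2⁻ᵏ⁻²)`. So `Y₂(n + 1) = T₂ (Y₂ n)` by
strong induction on `n`.
-/

open Set Function

section Intervals

variable {X : Type*} [LinearOrder X]

theorem Monotone.iUnion_Ico_succ_eq_Ico {f : ℕ → X} {a : X} (hf : Monotone f)
    (hlt : ∀ n, f n < a) (hex : ∀ x < a, ∃ n, x < f n) :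
    ⋃ n, Ico (f n) (f (n + 1)) = Ico (f 0) a := by
  apply Subset.antisymm
  · exact iUnion_subset fun n x hx => ⟨(hf n.zero_le).trans hx.1, hx.2.trans (hlt _)⟩
  · intro x hx
    obtain ⟨N, hN⟩ := hex x hx.2
    obtain ⟨n, -, hn⟩ := mem_iUnion₂.1 (Ico_subset_biUnion_Ico N f ⟨hx.1, hN⟩)
    exact mem_iUnion.2 ⟨n, hn⟩

theorem Antitone.iUnion_Ico_succ_eq_Ioo {g : ℕ → X} {a : X} (hg : Antitone g)
    (hgt : ∀ n, a < g n) (hex : ∀ x, a < x → ∃ n, g n < x) :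
    ⋃ n, Ico (g (n + 1)) (g n) = Ioo a (g 0) := by
  apply Subset.antisymm
  · exact iUnion_subset fun n x hx => ⟨(hgt _).trans_le hx.1, hx.2.trans_le (hg n.zero_le)⟩
  · intro x hx
    obtain ⟨N, hN⟩ := hex x hx.1
    obtain ⟨n, -, hn⟩ :=
      mem_iUnion₂.1 (Ioc_subset_biUnion_Ioc (X := Xᵒᵈ) N (OrderDual.toDual ∘ g) ⟨hx.2, hN.le⟩)
    exact mem_iUnion.2 ⟨n, hn.2, hn.1⟩

end Intervals

theorem measure_preimage_inter_iUnion_of_eqOn_add_const {G ι : Type*} [MeasurableSpace G]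
    [AddGroup G] [MeasurableAdd G] (μ : Measure G) [μ.IsAddRightInvariant] [Countable ι]
    {T : G → G} {I J : ι → Set G} {c : ι → G} (hJ : ∀ i, MeasurableSet (J i))
    (hIJ : ∀ i, (· + c i) ⁻¹' J i = I i) (hI : Pairwise (Disjoint on I))
    (hJd : Pairwise (Disjoint on J)) (hT : ∀ i, EqOn T (· + c i) (I i)) {s : Set G}
    (hs : MeasurableSet s) :
    μ (T ⁻¹' s ∩ ⋃ i, I i) = μ (s ∩ ⋃ i, J i) := by
  have hpiece : ∀ i, T ⁻¹' s ∩ I i = (· + c i) ⁻¹' (s ∩ J i) := fun i => by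
    rw [preimage_inter, hIJ, inter_comm, (hT i).inter_preimage_eq, inter_comm]
  rw [inter_iUnion, inter_iUnion, measure_iUnion, measure_iUnion]
  · simp only [hpiece, measure_preimage_add_right]
  · exact hJd.mono fun i j h => h.mono inter_subset_right inter_subset_right
  · exact fun i => hs.inter (hJ i)
  · exact hI.mono fun i j h => h.mono inter_subset_right inter_subset_right
  · exact fun i => hpiece i ▸ measurable_add_const _ (hs.inter (hJ i))

theorem monotone_one_sub_one_div_two_pow : Monotone fun k : ℕ => 1 - 1 / (2 : ℝ) ^ k :=
  fun _ _ h => sub_le_sub_left (one_div_pow_anti one_le_two h) 1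

theorem iUnion_Ico_one_sub_one_div_two_pow :
    ⋃ k : ℕ, Ico (1 - 1 / (2 : ℝ) ^ k) (1 - 1 / (2 : ℝ) ^ (k + 1)) = Ico 0 1 := by
  have h := Monotone.iUnion_Ico_succ_eq_Ico (f := fun k : ℕ => 1 - 1 / (2 : ℝ) ^ k) (a := 1)
    monotone_one_sub_one_div_two_pow (fun n => by simp)
    (fun x hx => by
      obtain ⟨n, hn⟩ := exists_pow_lt_of_lt_one (sub_pos.2 hx) (by norm_num : (1 / 2 : ℝ) < 1)
      exact ⟨n, by rw [div_pow, one_pow] at hn; linarith⟩)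
  simpa using h

theorem iUnion_Ico_one_div_two_pow :
    ⋃ k : ℕ, Ico (1 / (2 : ℝ) ^ (k + 1)) (1 / (2 : ℝ) ^ k) = Ioo 0 1 := by
  have h := Antitone.iUnion_Ico_succ_eq_Ioo (g := fun k : ℕ => 1 / (2 : ℝ) ^ k) (a := 0)
    (one_div_pow_anti one_le_two) (fun n => by positivity)
    (fun x hx => by
      obtain ⟨n, hn⟩ := exists_pow_lt_of_lt_one hx (by norm_num : (1 / 2 : ℝ) < 1)
      exact ⟨n, by rwa [div_pow, one_pow] at hn⟩)
  simpa using h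

theorem volume_preimage_inter_Ico_of_kakutani (T : ℝ → ℝ)
    (hT : ∀ k : ℕ, ∀ x ∈ Ico (1 - 1 / (2 : ℝ) ^ k) (1 - 1 / (2 : ℝ) ^ (k + 1)),
      T x = x - 1 + 1 / (2 : ℝ) ^ k + 1 / (2 : ℝ) ^ (k + 1))
    {s : Set ℝ} (hs₀ : s ⊆ Ico 0 1) (hs : MeasurableSet s) :
    volume (T ⁻¹' s ∩ Ico 0 1) = volume s := by
  have key := measure_preimage_inter_iUnion_of_eqOn_add_const volume
    (I := fun k : ℕ => Ico (1 - 1 / (2 : ℝ) ^ k) (1 - 1 / (2 : ℝ) ^ (k + 1)))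
    (J := fun k : ℕ => Ico (1 / (2 : ℝ) ^ (k + 1)) (1 / (2 : ℝ) ^ k))
    (c := fun k : ℕ => 1 / (2 : ℝ) ^ k + 1 / (2 : ℝ) ^ (k + 1) - 1)
    (fun _ => measurableSet_Ico)
    (fun k => by rw [preimage_add_const_Ico]; congr 1 <;> ring)
    (by simpa only [Order.succ_eq_add_one] using
      monotone_one_sub_one_div_two_pow.pairwise_disjoint_on_Ico_succ)
    (by simpa only [Order.succ_eq_add_one] using
      (one_div_pow_anti one_le_two).pairwise_disjoint_on_Ico_succ)
    (fun k x hx => (hT k x hx).trans (by ring)) hs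
  rw [iUnion_Ico_one_sub_one_div_two_pow, iUnion_Ico_one_div_two_pow] at key
  rw [key, measure_congr ((ae_eq_refl s).inter Ioo_ae_eq_Ico), inter_eq_left.2 hs₀]

theorem vdc_eq_sum_range {b n N : ℕ} (hb : 1 < b) (hN : n + 1 ≤ N) :
    vdc b n = ∑ j ∈ Finset.range N, ((n / b ^ j % b : ℕ) : ℝ) / (b : ℝ) ^ (j + 1) := by
  refine Finset.sum_subset (Finset.range_subset_range.2 hN) fun j _ hj => ?_
  have hlt : n < b ^ j :=
    (Nat.lt_pow_self hb).trans_le (Nat.pow_le_pow_right (by omega) (by simp at hj; omega))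
  simp [Nat.div_eq_of_lt hlt]

theorem vdc_mul_add {b m r : ℕ} (hb : 1 < b) (hr : r < b) :
    vdc b (b * m + r) = (r + vdc b m) / b := by
  have hm : m + 1 ≤ b * m + r + 1 := by
    have := Nat.le_mul_of_pos_left m (by omega : 0 < b); omega
  have hdigit : ∀ j, (b * m + r) / b ^ (j + 1) % b = m / b ^ j % b := fun j => by
    rw [pow_succ', ← Nat.div_div_eq_div_mul, Nat.mul_add_div (by omega), Nat.div_eq_of_lt hr,
      add_zero]
  rw [vdc_eq_sum_range (N := b * m + r + 1 + 1) hb (by omega), Finset.sum_range_succ',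
    vdc_eq_sum_range hb hm, add_div, Finset.sum_div, add_comm]
  simp only [hdigit, pow_zero, Nat.div_one, Nat.mul_add_mod_self_left, Nat.mod_eq_of_lt hr,
    zero_add, pow_one, pow_succ _ (_ + 1), div_div]

theorem vdc_mem_Ico {b : ℕ} (hb : 1 < b) (n : ℕ) : vdc b n ∈ Ico 0 1 := by
  induction n using Nat.strong_induction_on with
  | _ n ih =>
  rcases n.eq_zero_or_pos with rfl | hn
  · simp [vdc]
  obtain ⟨hm₀, hm₁⟩ := ih (n / b) (Nat.div_lt_self hn hb)
  have hr : ((n % b : ℕ) : ℝ) + 1 ≤ b := by exact_mod_cast Nat.mod_lt n (by omega)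
  have hb₀ : (0 : ℝ) < b := by positivity
  rw [← Nat.div_add_mod n b, vdc_mul_add hb (Nat.mod_lt n (by omega))]
  constructor
  · positivity
  · rw [div_lt_one hb₀]; linarith

theorem exists_vdc_two_succ_eq (n : ℕ) : ∃ k : ℕ,
    vdc 2 n ∈ Ico (1 - 1 / (2 : ℝ) ^ k) (1 - 1 / (2 : ℝ) ^ (k + 1)) ∧
    vdc 2 (n + 1) = vdc 2 n - 1 + 1 / (2 : ℝ) ^ k + 1 / (2 : ℝ) ^ (k + 1) := by
  have h_even (m : ℕ) : vdc 2 (2 * m) = vdc 2 m / 2 := by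
    simpa using vdc_mul_add (m := m) (r := 0) one_lt_two two_pos
  have h_odd (m : ℕ) : vdc 2 (2 * m + 1) = (1 + vdc 2 m) / 2 := by
    simpa using vdc_mul_add (m := m) (r := 1) one_lt_two one_lt_two
  induction n using Nat.strong_induction_on with
  | _ n ih =>
  obtain ⟨m, rfl | rfl⟩ := n.even_or_odd'
  · obtain ⟨h₀, h₁⟩ := vdc_mem_Ico one_lt_two m
    refine ⟨0, ⟨?_, ?_⟩, ?_⟩ <;> norm_num [h_even, h_odd] <;> linarith
  · obtain ⟨k, ⟨h₀, h₁⟩, hstep⟩ := ih m (by omega)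
    rw [show 2 * m + 1 + 1 = 2 * (m + 1) by ring, h_even, h_odd, hstep]
    refine ⟨k + 1, ⟨?_, ?_⟩, ?_⟩ <;>
      simp only [pow_succ, one_div, mul_inv] at h₀ h₁ ⊢ <;> linarith

/-- The binary von Neumann–Kakutani transformation preserves Lebesgue measure on
`[0,1)`, and the orbit of `0` under it is the binary van der Corput sequence. -/
theorem kakutani_measure_preserving_and_orbit (T : ℝ → ℝ)
    (hT : ∀ k : ℕ, ∀ x ∈ Set.Ico (1 - 1 / (2 : ℝ) ^ k) (1 - 1 / (2 : ℝ) ^ (k + 1)),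
      T x = x - 1 + 1 / (2 : ℝ) ^ k + 1 / (2 : ℝ) ^ (k + 1)) :
    (∀ s : Set ℝ, s ⊆ Set.Ico (0 : ℝ) 1 → MeasurableSet s →
        volume (T ⁻¹' s ∩ Set.Ico (0 : ℝ) 1) = volume s) ∧
    ∀ n : ℕ, T^[n] 0 = vdc 2 n := by
  refine ⟨fun s hs₀ hs => volume_preimage_inter_Ico_of_kakutani T hT hs₀ hs, fun n => ?_⟩
  induction n with
  | zero => simp [vdc]
  | succ n ih =>
    obtain ⟨k, hk, hstep⟩ := exists_vdc_two_succ_eq n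
    rw [iterate_succ_apply', ih, hT k _ hk, hstep]
end
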